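/- arXiv:2508.13967 — 2 statements merged into one kernel-verified Lean document; each statement's English description precedes it below -/
import Mathlib

section
/- For any DAG G and any nodes i,j and conditioning set K ⊆ V \ {i,j} with |K| ≤ 1, i and j are d-separated given K if and only if they are *-separated given K. -/
variable {V : Type*}

/-- Undirected adjacency in a digraph given by edge relation `E`. -/
def Adjd (E : V → V → Prop) (i j : V) : Prop := E i j ∨ E j i

/-- Parents of a node. -/
def pa (E : V → V → Prop) (j : V) : Set V := {u | E u j}

/-- A directed path from `i` to `j`, as a nonrepeating list of consecutive vertices. -/
def IsDirPath (E : V → V → Prop) (p : List V) (i j : V) : Prop :=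
  p.Chain' E ∧ p.head? = some i ∧ p.getLast? = some j ∧ p.Nodup

/-- An undirected path from `i` to `j`. -/
def IsUndirPath (E : V → V → Prop) (p : List V) (i j : V) : Prop :=
  p.Chain' (Adjd E) ∧ p.head? = some i ∧ p.getLast? = some j ∧ p.Nodup

/-- Interior (non-endpoint) vertices of a path. -/
def interiorL (p : List V) : List V := (p.drop 1).dropLast

/-- `k` is a collider on the path `p`: both path-edges at `k` point into `k`. -/
def IsColliderOn (E : V → V → Prop) (p : List V) (k : V) : Prop :=
  ∃ (l₁ l₂ : List V) (a b : V), p = l₁ ++ a :: k :: b :: l₂ ∧ E a k ∧ E b k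

/-- A digraph is acyclic if it has no directed cycles. -/
def Acyclic (E : V → V → Prop) : Prop := ∀ i, ¬ Relation.TransGen E i i

/-- `k ∈ An(K)`: `k` lies in `K` or is an ancestor of a member of `K`. -/
def InAn (E : V → V → Prop) (K : Set V) (k : V) : Prop :=
  k ∈ K ∨ ∃ m ∈ K, Relation.TransGen E k m

/-- The path `p` is d-connecting between `i` and `j` given `K`. -/
def DConnecting (E : V → V → Prop) (K : Set V) (p : List V) (i j : V) : Prop :=
  IsUndirPath E p i j ∧
  (∀ k, IsColliderOn E p k → InAn E K k) ∧
  (∀ k, k ∈ interiorL p → ¬ IsColliderOn E p k → k ∉ K)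

/-- d-separation of `i` and `j` given `K`. -/
def DSep (E : V → V → Prop) (K : Set V) (i j : V) : Prop :=
  ¬ ∃ p, DConnecting E K p i j

/-- The path `p` is *-connecting: d-connecting with at most one collider. -/
def StarConnecting (E : V → V → Prop) (K : Set V) (p : List V) (i j : V) : Prop :=
  DConnecting E K p i j ∧
  ∀ k₁ k₂, IsColliderOn E p k₁ → IsColliderOn E p k₂ → k₁ = k₂

/-- *-separation of `i` and `j` given `K`. -/
def StarSep (E : V → V → Prop) (K : Set V) (i j : V) : Prop :=
  ¬ ∃ p, StarConnecting E K p i j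

/-- The weight of a directed path: product of its edge weights. -/
def pathWeight (C : V → V → ℝ) (p : List V) : ℝ :=
  ((p.zip p.tail).map fun q => C q.1 q.2).prod

/-- A critical (maximum-weight) directed path from `i` to `j`. -/
def IsCritical (E : V → V → Prop) (C : V → V → ℝ) (p : List V) (i j : V) : Prop :=
  IsDirPath E p i j ∧ 2 ≤ p.length ∧
  ∀ q, IsDirPath E q i j → 2 ≤ q.length → pathWeight C q ≤ pathWeight C p

/-- Genericity of the weights: critical paths are unique when they exist. -/
def Generic (E : V → V → Prop) (C : V → V → ℝ) : Prop :=
  ∀ i j p q, IsCritical E C p i j → IsCritical E C q i j → p = q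

/-- Positivity of the edge weights. -/
def PosWeights (E : V → V → Prop) (C : V → V → ℝ) : Prop :=
  ∀ a b, E a b → 0 < C a b

/-- Edge of the weighted transitive reduction `G^tr_C`: the edge `i → j` is present in `G`
and every other directed `i`-`j` path has strictly smaller weight. -/
def TrEdge (E : V → V → Prop) (C : V → V → ℝ) (i j : V) : Prop :=
  E i j ∧ ∀ q, IsDirPath E q i j → 2 ≤ q.length → q ≠ [i, j] → pathWeight C q < C i j

/-- A path factors through `K` (relative to endpoints `i`,`j`). -/
def FactorsThrough (p : List V) (K : Set V) (i j : V) : Prop :=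
  ∃ k ∈ interiorL p, k ∈ K ∧ k ≠ i ∧ k ≠ j

/-- Edge of the critical DAG `G*_K(C)`. -/
def CritEdge (E : V → V → Prop) (C : V → V → ℝ) (K : Set V) (i j : V) : Prop :=
  (∃ p, IsDirPath E p i j ∧ 2 ≤ p.length) ∧
  ∀ p, IsCritical E C p i j → ¬ FactorsThrough p K i j

/-- `i` and `j` are C*-connected given `K`: one of the five types of connecting
paths exists in the critical DAG `G*_K(C)`. -/
def CStarConnected (E : V → V → Prop) (C : V → V → ℝ) (K : Set V) (i j : V) : Prop :=
  (CritEdge E C K i j ∨ CritEdge E C K j i) ∨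
  (∃ p, p ∉ K ∧ CritEdge E C K p i ∧ CritEdge E C K p j) ∨
  (∃ l ∈ K, CritEdge E C K i l ∧ CritEdge E C K j l) ∨
  (∃ p, ∃ l ∈ K, p ∉ K ∧ CritEdge E C K p i ∧ CritEdge E C K p l ∧ CritEdge E C K j l) ∨
  (∃ p, ∃ l ∈ K, p ∉ K ∧ CritEdge E C K p j ∧ CritEdge E C K p l ∧ CritEdge E C K i l) ∨
  (∃ p q, ∃ l ∈ K, p ∉ K ∧ q ∉ K ∧ CritEdge E C K p i ∧ CritEdge E C K p l ∧
    CritEdge E C K q l ∧ CritEdge E C K q j)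

/-- C*-separation of `i` and `j` given `K`. -/
def CStarSep (E : V → V → Prop) (C : V → V → ℝ) (K : Set V) (i j : V) : Prop :=
  ¬ CStarConnected E C K i j

/-- `b` immediately follows `a` in the cyclic order given by the list `p`. -/
def CycConsec (p : List V) (a b : V) : Prop :=
  ∃ t : Fin p.length, p.get t = a ∧
    p.get ⟨(t.val + 1) % p.length, Nat.mod_lt _ t.pos⟩ = b

/-- The list `p` enumerates, in cyclic order, an induced subgraph of the digraph `E`
which is (as an undirected graph) a simple cycle. -/
def IsInducedCycleList (E : V → V → Prop) (p : List V) : Prop :=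
  p.Nodup ∧ 3 ≤ p.length ∧
  ∀ a ∈ p, ∀ b ∈ p, (Adjd E a b ↔ (CycConsec p a b ∨ CycConsec p b a))

/-- `k` is a collider of the induced cycle `p`: both incident cycle edges point into `k`. -/
def CycCollider (E : V → V → Prop) (p : List V) (k : V) : Prop :=
  ∃ a b, a ≠ b ∧ CycConsec p a k ∧ CycConsec p k b ∧ E a k ∧ E b k


/-!
A *-connecting path is d-connecting, so only the converse needs an argument. Let `p` be a
d-connecting path. If it has no collider it is *-connecting. Otherwise `K = {l}` and every
collider of `p` is `l` or an ancestor of `l`. Following `p` from `i` to its first collider and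
then a directed path down to `l` gives a collider-free walk into `l` avoiding `K`; doing the same
from `j` and gluing the two walks at `l` gives a walk whose only collider is `l`. Such a walk is
shortened to a path by cutting out the loop between two occurrences of a vertex `v`. This keeps
it *-connecting: if `v` becomes a collider, the loop contained a collider at an occurrence of `v`
or, since both ends of the loop then leave `v`, a collider below `v`, so `v ∈ An(K)`; and if
`v ∈ K`, both of its occurrences were colliders, which is impossible.
-/

section Walks

variable {E : V → V → Prop} {K : Set V} {l : V}

theorem Acyclic.not_rel_of_rel (hA : Acyclic E) {a b : V} (h : E a b) : ¬ E b a :=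
  fun h' => hA a (.tail (.single h) h')

theorem Acyclic.not_adjd_self (hA : Acyclic E) (a : V) : ¬ Adjd E a a :=
  fun h => h.elim (fun h => hA.not_rel_of_rel h h) (fun h => hA.not_rel_of_rel h h)

theorem InAn.of_reflTransGen {k k₀ : V} (h : Relation.ReflTransGen E k k₀)
    (hk₀ : InAn E K k₀) : InAn E K k := by
  rcases Relation.reflTransGen_iff_eq_or_transGen.1 h with rfl | h
  · exact hk₀
  · rcases hk₀ with hk₀ | ⟨m, hm, h'⟩
    exacts [.inr ⟨k₀, hk₀, h⟩, .inr ⟨m, hm, h.trans h'⟩]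

theorem exists_isChain_of_transGen (hA : Acyclic E) {c : V} (h : Relation.TransGen E c l) :
    ∃ M, (c :: M ++ [l]).IsChain E ∧ l ∉ M := by
  induction h using Relation.TransGen.head_induction_on with
  | single h => exact ⟨[], by simpa using h, by simp⟩
  | head hcc' hc'l ih =>
    obtain ⟨M, hM, hlM⟩ := ih
    refine ⟨_ :: M, .cons_cons hcc' hM, ?_⟩
    rintro (_ | ⟨_, hl⟩)
    exacts [hA _ hc'l, hlM hl]

theorem List.exists_eq_append_cons_append_cons_of_not_nodup {α : Type*} {w : List α}
    (h : ¬ w.Nodup) : ∃ A B C v, w = A ++ v :: (B ++ v :: C) := by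
  obtain ⟨v, hv⟩ : ∃ v, List.Sublist [v, v] w := by simpa [List.nodup_iff_sublist] using h
  obtain ⟨r₁, r₂, rfl, h₁, h₂⟩ := List.cons_sublist_iff.1 hv
  obtain ⟨A, B, rfl⟩ := List.append_of_mem h₁
  obtain ⟨B', C, rfl⟩ := List.append_of_mem (List.singleton_sublist.1 h₂)
  exact ⟨A, B ++ B', C, v, by simp⟩

theorem getElem?_append_cons_of_le {A C : List V} {v : V} {m : ℕ} (hm : m ≤ A.length) :
    (A ++ v :: C)[m]? = (A ++ [v])[m]? := by
  rcases hm.lt_or_eq with hm | rfl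
  · rw [List.getElem?_append_left hm, List.getElem?_append_left hm]
  · simp

theorem getElem?_append_cons_of_ge {A C : List V} {v : V} {m : ℕ} (hm : A.length ≤ m) :
    (A ++ v :: C)[m]? = (v :: C)[m - A.length]? :=
  List.getElem?_append_right hm

/-- Walks may revisit vertices, so their colliders are recorded by position: `k` sits at
position `n + 1` of `w`, between two edges pointing into it. -/
def IsColliderAt (E : V → V → Prop) (w : List V) (n : ℕ) (k : V) : Prop :=
  ∃ a b, w[n]? = some a ∧ w[n + 1]? = some k ∧ w[n + 2]? = some b ∧ E a k ∧ E b k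

theorem IsColliderAt.lt_length {w : List V} {n : ℕ} {k : V} (h : IsColliderAt E w n k) :
    n + 2 < w.length := by
  obtain ⟨_, _, _, _, hb, _, _⟩ := h
  exact (List.getElem?_eq_some_iff.1 hb).1

theorem IsColliderAt.getElem?_eq {w : List V} {n : ℕ} {k : V} (h : IsColliderAt E w n k) :
    w[n + 1]? = some k := by
  obtain ⟨_, _, _, hk, _⟩ := h
  exact hk

theorem IsColliderAt.cons {w : List V} {n : ℕ} {k : V} (x : V) (h : IsColliderAt E w n k) :
    IsColliderAt E (x :: w) (n + 1) k := h

theorem IsColliderAt.append_append {u : List V} {n : ℕ} {k : V} (A C : List V)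
    (h : IsColliderAt E u n k) : IsColliderAt E (A ++ u ++ C) (A.length + n) k := by
  have hu := h.lt_length
  have key : ∀ m < u.length, (A ++ u ++ C)[A.length + m]? = u[m]? := fun m hm => by
    rw [List.append_assoc, List.getElem?_append_right (by omega), Nat.add_sub_cancel_left,
      List.getElem?_append_left hm]
  obtain ⟨a, b, ha, hk, hb, hak, hbk⟩ := h
  exact ⟨a, b, by rw [key n (by omega), ha], by rw [add_assoc, key _ (by omega), hk],
    by rw [add_assoc, key _ (by omega), hb], hak, hbk⟩

theorem IsColliderAt.of_take {w : List V} {t n : ℕ} {k : V}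
    (h : IsColliderAt E (w.take t) n k) : IsColliderAt E w n k := by
  obtain ⟨a, b, ha, hk, hb, hak, hbk⟩ := h
  simp only [List.getElem?_take] at ha hk hb
  split_ifs at ha hk hb
  exact ⟨a, b, ha, hk, hb, hak, hbk⟩

theorem not_isColliderAt_of_isChain (hA : Acyclic E) {w : List V} (hw : w.IsChain E) (n : ℕ)
    (k : V) : ¬ IsColliderAt E w n k := by
  rintro ⟨a, b, -, hk, hb, -, hbk⟩
  rw [List.isChain_iff_getElem] at hw
  obtain ⟨h1, rfl⟩ := List.getElem?_eq_some_iff.1 hk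
  obtain ⟨h2, rfl⟩ := List.getElem?_eq_some_iff.1 hb
  exact hA.not_rel_of_rel (hw (n + 1) h2) hbk

theorem isColliderAt_reverse_iff {w : List V} {n : ℕ} {k : V} (h : n + 2 < w.length) :
    IsColliderAt E w.reverse n k ↔ IsColliderAt E w (w.length - 3 - n) k := by
  simp only [IsColliderAt, List.getElem?_reverse (show n < w.length by omega),
    List.getElem?_reverse (show n + 1 < w.length by omega),
    List.getElem?_reverse (show n + 2 < w.length by omega),
    show w.length - 1 - n = w.length - 3 - n + 2 by omega,
    show w.length - 1 - (n + 1) = w.length - 3 - n + 1 by omega,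
    show w.length - 1 - (n + 2) = w.length - 3 - n by omega]
  constructor <;> exact fun ⟨a, b, ha, hk, hb, hak, hbk⟩ => ⟨b, a, hb, hk, ha, hbk, hak⟩

theorem IsColliderAt.reverse {w : List V} {n : ℕ} {k : V} (h : IsColliderAt E w n k) :
    IsColliderAt E w.reverse (w.length - 3 - n) k := by
  have := h.lt_length
  rwa [isColliderAt_reverse_iff (by omega), show w.length - 3 - (w.length - 3 - n) = n by omega]

theorem isColliderAt_append_cons_iff_of_add_two_le {A C : List V} {v : V} {n : ℕ} {k : V}
    (hn : n + 2 ≤ A.length) :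
    IsColliderAt E (A ++ v :: C) n k ↔ IsColliderAt E (A ++ [v]) n k := by
  simp only [IsColliderAt, getElem?_append_cons_of_le (show n ≤ A.length by omega),
    getElem?_append_cons_of_le (show n + 1 ≤ A.length by omega), getElem?_append_cons_of_le hn]

theorem isColliderAt_append_cons_iff_of_le {A C : List V} {v : V} {n : ℕ} {k : V}
    (hn : A.length ≤ n) :
    IsColliderAt E (A ++ v :: C) n k ↔ IsColliderAt E (v :: C) (n - A.length) k := by
  simp only [IsColliderAt, getElem?_append_cons_of_ge hn,
    getElem?_append_cons_of_ge (show A.length ≤ n + 1 by omega),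
    getElem?_append_cons_of_ge (show A.length ≤ n + 2 by omega),
    show n + 1 - A.length = n - A.length + 1 by omega,
    show n + 2 - A.length = n - A.length + 2 by omega]

theorem isColliderAt_append_cons_iff {A C : List V} {v : V} {n : ℕ} {k : V} :
    IsColliderAt E (A ++ v :: C) n k ↔
      (n + 2 ≤ A.length ∧ IsColliderAt E (A ++ [v]) n k) ∨
      (n + 1 = A.length ∧ k = v ∧
        ∃ a b, A.getLast? = some a ∧ C.head? = some b ∧ E a v ∧ E b v) ∨
      (A.length ≤ n ∧ IsColliderAt E (v :: C) (n - A.length) k) := by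
  rcases lt_trichotomy (n + 1) A.length with h | h | h
  · rw [isColliderAt_append_cons_iff_of_add_two_le h]
    constructor
    · exact fun h' => .inl ⟨h, h'⟩
    · rintro (⟨-, h'⟩ | ⟨h', -⟩ | ⟨h', -⟩) <;> first | exact h' | omega
  · obtain ⟨A, a, rfl⟩ := List.eq_nil_or_concat A |>.resolve_left (by rintro rfl; simp at h)
    obtain rfl : n = A.length := by simp at h; omega
    cases C <;> simp +contextual [IsColliderAt, iff_def, eq_comm]
  · rw [isColliderAt_append_cons_iff_of_le (by omega)]
    constructor
    · exact fun h' => .inr (.inr ⟨by omega, h'⟩)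
    · rintro (⟨h', -⟩ | ⟨h', -⟩ | ⟨-, h'⟩) <;> first | exact h' | omega

theorem exists_isColliderAt_reflTransGen (y : V) : ∀ (B : List V) (x b : V),
    (x :: b :: (B ++ [y])).IsChain (Adjd E) → E x b →
    E y ((b :: B).getLast (List.cons_ne_nil _ _)) →
    ∃ n k, IsColliderAt E (x :: b :: (B ++ [y])) n k ∧ Relation.ReflTransGen E x k
  | [], x, b, _, hxb, hyb => ⟨0, b, ⟨x, y, rfl, rfl, rfl, hxb, hyb⟩, .single hxb⟩
  | c :: B, x, b, hw, hxb, hyc => by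
    by_cases hcb : E c b
    · exact ⟨0, b, ⟨x, c, rfl, rfl, rfl, hxb, hcb⟩, .single hxb⟩
    · have hw' := (List.isChain_cons_cons.1 hw).2
      obtain ⟨n, k, hk, hbk⟩ := exists_isColliderAt_reflTransGen y B b c hw'
        ((List.isChain_cons_cons.1 hw').1.resolve_right hcb) (by simpa using hyc)
      exact ⟨n + 1, k, hk.cons x, .head hxb hbk⟩

theorem exists_isColliderAt_on_loop (hA : Acyclic E) {A B C : List V} {v a b : V}
    (hw : (A ++ v :: (B ++ v :: C)).IsChain (Adjd E)) (ha : A.getLast? = some a)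
    (hb : C.head? = some b) (hav : E a v) (hbv : E b v) :
    ∃ n k, IsColliderAt E (A ++ v :: (B ++ v :: C)) n k ∧ Relation.ReflTransGen E v k ∧
      A.length ≤ n + 1 ∧ n ≤ A.length + B.length := by
  have hA₀ : 0 < A.length := List.length_pos_iff.2 (by rintro rfl; simp at ha)
  obtain ⟨b₀, B, rfl⟩ := List.exists_cons_of_ne_nil (show B ≠ [] by
    rintro rfl
    exact hA.not_adjd_self v (List.isChain_append_cons_cons.1 hw).2.1)
  by_cases hb₀ : E b₀ v
  · exact ⟨A.length - 1, v, isColliderAt_append_cons_iff.2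
      (.inr (.inl ⟨by omega, rfl, a, b₀, ha, rfl, hav, hb₀⟩)), .refl, by omega, by omega⟩
  set b₁ := (b₀ :: B).getLast (List.cons_ne_nil _ _)
  have hb₁_eq : (A ++ v :: b₀ :: B).getLast? = some b₁ := by
    simp [b₁, List.getLast?_eq_some_getLast]
  by_cases hb₁ : E b₁ v
  · refine ⟨A.length + B.length + 1, v, ?_, .refl, by omega, by simp⟩
    have := (isColliderAt_append_cons_iff (A := A ++ v :: b₀ :: B) (C := C)
      (n := A.length + B.length + 1)).2
      (.inr (.inl ⟨by simp; omega, rfl, b₁, b, hb₁_eq, hb, hb₁, hbv⟩))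
    simpa using this
  have hloop : (v :: b₀ :: (B ++ [v])).IsChain (Adjd E) := hw.infix ⟨A, C, by simp⟩
  have hvb₁ : E v b₁ := by
    refine ((List.isChain_append.1 (show ((v :: b₀ :: B) ++ [v]).IsChain (Adjd E) by
      simpa using hloop)).2.2 b₁ ?_ v rfl).resolve_left hb₁
    simpa using hb₁_eq
  obtain ⟨m, k, hm, hvk⟩ := exists_isColliderAt_reflTransGen v B v b₀ hloop
    ((List.isChain_cons_cons.1 hloop).1.resolve_right hb₀) hvb₁
  have hm' := hm.lt_length
  refine ⟨A.length + m, k, ?_, hvk, by omega, by simp at hm' ⊢; omega⟩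
  simpa using hm.append_append A C

end Walks
section ConnectingWalks

variable {E : V → V → Prop} {K : Set V} {i j l : V}

structure IsDConnectingWalk (E : V → V → Prop) (K : Set V) (i j : V) (w : List V) : Prop where
  isChain : w.IsChain (Adjd E)
  head?_eq : w.head? = some i
  getLast?_eq : w.getLast? = some j
  inAn : ∀ n k, IsColliderAt E w n k → InAn E K k
  not_mem : ∀ n k, w[n + 1]? = some k → n + 2 < w.length → ¬ IsColliderAt E w n k → k ∉ K

structure IsStarConnectingWalk (E : V → V → Prop) (K : Set V) (i j : V) (w : List V) : Prop
    extends IsDConnectingWalk E K i j w where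
  eq_of_isColliderAt :
    ∀ n₁ k₁ n₂ k₂, IsColliderAt E w n₁ k₁ → IsColliderAt E w n₂ k₂ → n₁ = n₂

theorem isColliderOn_iff_exists_isColliderAt {w : List V} {k : V} :
    IsColliderOn E w k ↔ ∃ n, IsColliderAt E w n k := by
  constructor
  · rintro ⟨l₁, l₂, a, b, rfl, ha, hb⟩
    exact ⟨l₁.length, a, b, by simp, by simp, by simp, ha, hb⟩
  · rintro ⟨n, a, b, ha, hk, hb, hak, hbk⟩
    refine ⟨w.take n, w.drop (n + 3), a, b, ?_, hak, hbk⟩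
    obtain ⟨h₀, rfl⟩ := List.getElem?_eq_some_iff.1 ha
    obtain ⟨h₁, rfl⟩ := List.getElem?_eq_some_iff.1 hk
    obtain ⟨h₂, rfl⟩ := List.getElem?_eq_some_iff.1 hb
    conv_lhs => rw [← List.take_append_drop n w, List.drop_eq_getElem_cons h₀,
      List.drop_eq_getElem_cons h₁, List.drop_eq_getElem_cons h₂]

theorem mem_interiorL_iff {w : List V} {k : V} :
    k ∈ interiorL w ↔ ∃ n, w[n + 1]? = some k ∧ n + 2 < w.length := by
  simp only [interiorL, List.mem_iff_getElem?, List.getElem?_dropLast, List.getElem?_drop,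
    List.length_drop]
  constructor
  · rintro ⟨n, hn⟩
    split_ifs at hn with h
    exact ⟨n, by rwa [add_comm], by omega⟩
  · rintro ⟨n, hn, hlt⟩
    exact ⟨n, by rw [if_pos (by omega), add_comm, hn]⟩

theorem DConnecting.isDConnectingWalk {w : List V} (h : DConnecting E K w i j) :
    IsDConnectingWalk E K i j w := by
  obtain ⟨⟨hch, hhd, hlast, hnd⟩, hcol, hncol⟩ := h
  refine ⟨hch, hhd, hlast,
    fun n k hk => hcol k (isColliderOn_iff_exists_isColliderAt.2 ⟨n, hk⟩),
    fun n k hk hn hnk => hncol k (mem_interiorL_iff.2 ⟨n, hk, hn⟩) ?_⟩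
  rintro hcolk
  obtain ⟨m, hm⟩ := isColliderOn_iff_exists_isColliderAt.1 hcolk
  have : m + 1 = n + 1 :=
    (List.getElem?_inj (by have := hm.lt_length; omega) hnd).1 (by rw [hm.getElem?_eq, hk])
  exact hnk (by rwa [show n = m by omega])

theorem IsStarConnectingWalk.starConnecting {w : List V} (h : IsStarConnectingWalk E K i j w)
    (hw : w.Nodup) : StarConnecting E K w i j := by
  refine ⟨⟨⟨h.isChain, h.head?_eq, h.getLast?_eq, hw⟩, fun k hk => ?_,
    fun k hk hnk => ?_⟩, fun k₁ k₂ h₁ h₂ => ?_⟩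
  · obtain ⟨n, hn⟩ := isColliderOn_iff_exists_isColliderAt.1 hk
    exact h.inAn n k hn
  · obtain ⟨n, hn, hlt⟩ := mem_interiorL_iff.1 hk
    exact h.not_mem n k hn hlt fun hc => hnk (isColliderOn_iff_exists_isColliderAt.2 ⟨n, hc⟩)
  · obtain ⟨n₁, hn₁⟩ := isColliderOn_iff_exists_isColliderAt.1 h₁
    obtain ⟨n₂, hn₂⟩ := isColliderOn_iff_exists_isColliderAt.1 h₂
    have h₁₂ := h.eq_of_isColliderAt _ _ _ _ hn₁ hn₂
    have := hn₂.getElem?_eq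
    rw [← h₁₂, hn₁.getElem?_eq] at this
    exact Option.some_inj.1 this

theorem IsDConnectingWalk.reverse {w : List V} (h : IsDConnectingWalk E K i j w) :
    IsDConnectingWalk E K j i w.reverse := by
  refine ⟨List.isChain_reverse.2 (h.isChain.imp fun _ _ hab => hab.symm),
    by simpa using h.getLast?_eq, by simpa using h.head?_eq, fun n k hk => ?_,
    fun n k hk hn hnk => ?_⟩
  · have := hk.lt_length
    exact h.inAn _ k ((isColliderAt_reverse_iff (by simpa using this)).1 hk)
  · rw [List.length_reverse] at hn
    rw [List.getElem?_reverse (by omega)] at hk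
    rw [show w.length - 1 - (n + 1) = w.length - 3 - n + 1 by omega] at hk
    refine h.not_mem (w.length - 3 - n) k hk (by omega) ?_
    rwa [← isColliderAt_reverse_iff (by omega)]

/-- `A ++ [l]` is a collider-free walk from `i` whose last edge points into `l`, and `A` avoids
`K`. -/
structure IsTrekInto (E : V → V → Prop) (K : Set V) (i l : V) (A : List V) : Prop where
  isChain : (A ++ [l]).IsChain (Adjd E)
  head?_eq : A.head? = some i
  exists_getLast?_eq : ∃ x, A.getLast? = some x ∧ E x l
  not_isColliderAt : ∀ n k, ¬ IsColliderAt E (A ++ [l]) n k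
  not_mem : ∀ x ∈ A, x ∉ K

theorem IsDConnectingWalk.isTrekInto_take {w : List V} (hw : IsDConnectingWalk E K i j w)
    (hiK : i ∉ K) {n : ℕ} {c : V} (hc : IsColliderAt E w n c)
    (hmin : ∀ m k, IsColliderAt E w m k → n ≤ m) :
    IsTrekInto E K i c (w.take (n + 1)) := by
  have hlt := hc.lt_length
  obtain ⟨a, b, ha, hk, -, hac, -⟩ := hc
  have htake : w.take (n + 1) ++ [c] = w.take (n + 2) := by
    rw [List.take_add_one (i := n + 1), hk]
    rfl
  refine ⟨htake ▸ hw.isChain.take _, ?_, ⟨a, ?_, hac⟩, fun m k hm => ?_, fun x hx => ?_⟩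
  · rw [List.head?_take, if_neg (by omega)]
    exact hw.head?_eq
  · rw [List.getLast?_take, if_neg (by omega), Nat.add_sub_cancel, ha]
    rfl
  · rw [htake] at hm
    have hm' := hm.lt_length
    have := hmin m k hm.of_take
    rw [List.length_take] at hm'
    omega
  · obtain ⟨m, hm⟩ := List.mem_iff_getElem?.1 hx
    rw [List.getElem?_take] at hm
    split_ifs at hm with hmn
    cases m with
    | zero =>
      rw [← List.head?_eq_getElem?, hw.head?_eq, Option.some_inj] at hm
      exact hm ▸ hiK
    | succ m => exact hw.not_mem m x hm (by omega) fun h => by have := hmin m x h; omega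

theorem IsTrekInto.append_cons (hA : Acyclic E) {A M : List V} {c : V}
    (h : IsTrekInto E K i c A) (hc : c ∉ K) (hM : (c :: M ++ [l]).IsChain E)
    (hMK : ∀ x ∈ M, x ∉ K) : IsTrekInto E K i l (A ++ c :: M) := by
  have hsplit : A ++ c :: M ++ [l] = A ++ c :: (M ++ [l]) := by simp
  refine ⟨?_, ?_, ?_, fun n k hn => ?_, ?_⟩
  · rw [hsplit]
    exact List.isChain_split.2 ⟨h.isChain, hM.imp fun _ _ => Or.inl⟩
  · simp [List.head?_append, h.head?_eq]
  · obtain ⟨-, -, hlast⟩ := List.isChain_append.1 (show ((c :: M) ++ [l]).IsChain E from hM)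
    refine ⟨(c :: M).getLast (List.cons_ne_nil _ _), ?_, hlast _ ?_ _ (by simp)⟩ <;>
      simp [List.getLast?_eq_some_getLast]
  · rw [hsplit, isColliderAt_append_cons_iff] at hn
    rcases hn with ⟨-, hn⟩ | ⟨-, -, a, b, -, hb, -, hbc⟩ | ⟨-, hn⟩
    · exact h.not_isColliderAt n k hn
    · exact hA.not_rel_of_rel (List.isChain_cons.1 hM |>.1 b hb) hbc
    · exact not_isColliderAt_of_isChain hA hM _ _ hn
  · simp only [List.mem_append, List.mem_cons]
    rintro x ((hx | rfl | hx))
    exacts [h.not_mem x hx, hc, hMK x hx]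

theorem IsDConnectingWalk.exists_isTrekInto (hA : Acyclic E) {w : List V}
    (hw : IsDConnectingWalk E K i j w)
    (hiK : i ∉ K) (hK : ∀ x ∈ K, x = l) (hcol : ∃ n k, IsColliderAt E w n k) :
    ∃ A, IsTrekInto E K i l A := by
  classical
  obtain ⟨c, hc⟩ := Nat.find_spec hcol
  have htrek := hw.isTrekInto_take hiK hc fun m k h => Nat.find_min' hcol ⟨k, h⟩
  rcases hw.inAn _ c hc with hcK | ⟨m, hm, hcm⟩
  · exact ⟨_, hK c hcK ▸ htrek⟩
  · obtain rfl := hK m hm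
    obtain ⟨M, hM, hlM⟩ := exists_isChain_of_transGen hA hcm
    exact ⟨_, htrek.append_cons hA (fun hcK => hA _ (hK c hcK ▸ hcm)) hM
      fun x hx hxK => hlM (hK x hxK ▸ hx)⟩

theorem IsTrekInto.eq_of_isColliderAt_append_cons_reverse {A B : List V}
    (hi : IsTrekInto E K i l A) (hj : IsTrekInto E K j l B) {n : ℕ} {k : V}
    (hn : IsColliderAt E (A ++ l :: B.reverse) n k) : n + 1 = A.length ∧ k = l := by
  rcases isColliderAt_append_cons_iff.1 hn with ⟨-, hn⟩ | ⟨hn, hk, -⟩ | ⟨-, hn⟩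
  · exact absurd hn (hi.not_isColliderAt n k)
  · exact ⟨hn, hk⟩
  · rw [show l :: B.reverse = (B ++ [l]).reverse by simp] at hn
    have := hn.lt_length
    exact absurd ((isColliderAt_reverse_iff (by simpa using this)).1 hn)
      (hj.not_isColliderAt _ k)

theorem IsTrekInto.isColliderAt_append_cons_reverse {A B : List V}
    (hi : IsTrekInto E K i l A) (hj : IsTrekInto E K j l B) :
    IsColliderAt E (A ++ l :: B.reverse) (A.length - 1) l := by
  obtain ⟨a, ha, hal⟩ := hi.exists_getLast?_eq
  obtain ⟨b, hb, hbl⟩ := hj.exists_getLast?_eq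
  have : 0 < A.length := List.length_pos_iff.2 (by rintro rfl; simp at ha)
  exact isColliderAt_append_cons_iff.2
    (.inr (.inl ⟨by omega, rfl, a, b, ha, by simpa using hb, hal, hbl⟩))

theorem IsTrekInto.isStarConnectingWalk {A B : List V} (hl : l ∈ K) (hi : IsTrekInto E K i l A)
    (hj : IsTrekInto E K j l B) : IsStarConnectingWalk E K i j (A ++ l :: B.reverse) := by
  have hrev : l :: B.reverse = (B ++ [l]).reverse := by simp
  refine ⟨⟨List.isChain_split.2 ⟨hi.isChain, hrev ▸ List.isChain_reverse.2
      (hj.isChain.imp fun _ _ h => h.symm)⟩, ?_, ?_,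
      fun n k hn => (hi.eq_of_isColliderAt_append_cons_reverse hj hn).2 ▸ .inl hl,
      fun n k hk hn hnk => ?_⟩, fun n₁ k₁ n₂ k₂ h₁ h₂ => ?_⟩
  · simp [List.head?_append, hi.head?_eq]
  · rw [List.getLast?_append_cons, hrev, List.getLast?_reverse, List.head?_append, hj.head?_eq]
    rfl
  · rcases lt_trichotomy (n + 1) A.length with h | h | h
    · rw [List.getElem?_append_left h] at hk
      exact hi.not_mem k (List.mem_of_getElem? hk)
    · rw [h, List.getElem?_append_right le_rfl, Nat.sub_self] at hk
      obtain rfl : l = k := by simpa using hk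
      obtain rfl : n = A.length - 1 := by omega
      exact absurd (hi.isColliderAt_append_cons_reverse hj) hnk
    · rw [List.getElem?_append_right h.le, show n + 1 - A.length = n - A.length + 1 by omega,
        List.getElem?_cons_succ] at hk
      exact hj.not_mem k (List.mem_reverse.1 (List.mem_of_getElem? hk))
  · have := (hi.eq_of_isColliderAt_append_cons_reverse hj h₁).1
    have := (hi.eq_of_isColliderAt_append_cons_reverse hj h₂).1
    omega

section Shortcut

variable {A B C : List V} {v : V}

theorem getElem?_shortcut_of_le {m : ℕ} (hm : m ≤ A.length) :
    (A ++ v :: C)[m]? = (A ++ v :: (B ++ v :: C))[m]? := by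
  rw [getElem?_append_cons_of_le hm, getElem?_append_cons_of_le (C := B ++ v :: C) hm]

theorem getElem?_shortcut_of_ge {m : ℕ} (hm : A.length ≤ m) :
    (A ++ v :: C)[m]? = (A ++ v :: (B ++ v :: C))[m + B.length + 1]? := by
  rw [show A ++ v :: (B ++ v :: C) = (A ++ v :: B) ++ v :: C by simp,
    getElem?_append_cons_of_ge hm, getElem?_append_cons_of_ge (by simp; omega),
    show m + B.length + 1 - (A ++ v :: B).length = m - A.length by simp; omega]

theorem isColliderAt_shortcut_iff_of_add_two_le {n : ℕ} {k : V} (hn : n + 2 ≤ A.length) :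
    IsColliderAt E (A ++ v :: C) n k ↔ IsColliderAt E (A ++ v :: (B ++ v :: C)) n k := by
  rw [isColliderAt_append_cons_iff_of_add_two_le hn,
    isColliderAt_append_cons_iff_of_add_two_le (C := B ++ v :: C) hn]

theorem isColliderAt_shortcut_iff_of_le {n : ℕ} {k : V} (hn : A.length ≤ n) :
    IsColliderAt E (A ++ v :: C) n k ↔
      IsColliderAt E (A ++ v :: (B ++ v :: C)) (n + B.length + 1) k := by
  rw [show A ++ v :: (B ++ v :: C) = (A ++ v :: B) ++ v :: C by simp,
    isColliderAt_append_cons_iff_of_le hn, isColliderAt_append_cons_iff_of_le (by simp; omega),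
    show n + B.length + 1 - (A ++ v :: B).length = n - A.length by simp; omega]

theorem exists_isColliderAt_of_shortcut (hA : Acyclic E)
    (hw : (A ++ v :: (B ++ v :: C)).IsChain (Adjd E)) {n : ℕ} {k : V}
    (hk : IsColliderAt E (A ++ v :: C) n k) :
    ∃ n₀ k₀, IsColliderAt E (A ++ v :: (B ++ v :: C)) n₀ k₀ ∧ Relation.ReflTransGen E k k₀ ∧
      (n + 2 ≤ A.length → n₀ = n) ∧ (A.length ≤ n → n₀ = n + B.length + 1) ∧
      (n + 1 = A.length → A.length ≤ n₀ + 1 ∧ n₀ ≤ A.length + B.length) := by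
  rcases lt_trichotomy (n + 1) A.length with h | h | h
  · exact ⟨n, k, (isColliderAt_shortcut_iff_of_add_two_le h).1 hk, .refl, fun _ => rfl,
      by omega, by omega⟩
  · obtain ⟨-, rfl, a, b, ha, hb, hak, hbk⟩ :=
      (isColliderAt_append_cons_iff.1 hk).resolve_left (by omega) |>.resolve_right (by omega)
    obtain ⟨n₀, k₀, h₀, hkk₀, hb⟩ := exists_isColliderAt_on_loop hA hw ha hb hak hbk
    exact ⟨n₀, k₀, h₀, hkk₀, by omega, by omega, fun _ => hb⟩
  · exact ⟨_, k, (isColliderAt_shortcut_iff_of_le (by omega)).1 hk, .refl, by omega,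
      fun _ => rfl, by omega⟩

theorem IsStarConnectingWalk.shortcut (hA : Acyclic E)
    (hw : IsStarConnectingWalk E K i j (A ++ v :: (B ++ v :: C))) :
    IsStarConnectingWalk E K i j (A ++ v :: C) := by
  have hsplit : A ++ v :: (B ++ v :: C) = (A ++ v :: B) ++ v :: C := by simp
  have hlen : (A ++ v :: (B ++ v :: C)).length = A.length + B.length + C.length + 2 := by
    simp; omega
  refine ⟨⟨?_, ?_, ?_, fun n k hk => ?_, fun n k hk hn hnk => ?_⟩,
    fun n₁ k₁ n₂ k₂ h₁ h₂ => ?_⟩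
  · exact List.isChain_split.2 ⟨(List.isChain_split.1 hw.isChain).1,
      (List.isChain_split.1 (hsplit ▸ hw.isChain)).2⟩
  · rw [← hw.head?_eq]
    cases A <;> rfl
  · rw [← hw.getLast?_eq, hsplit, List.getLast?_append_cons, List.getLast?_append_cons]
  · obtain ⟨n₀, k₀, h₀, hkk₀, -⟩ := exists_isColliderAt_of_shortcut hA hw.isChain hk
    exact (hw.inAn n₀ k₀ h₀).of_reflTransGen hkk₀
  · simp only [List.length_append, List.length_cons] at hn
    have hk₁ : A.length ≤ n + 1 →
        (A ++ v :: (B ++ v :: C))[n + B.length + 1 + 1]? = some k := fun h => by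
      rw [show n + B.length + 1 + 1 = n + 1 + B.length + 1 by omega, ← getElem?_shortcut_of_ge h]
      exact hk
    rcases lt_trichotomy (n + 1) A.length with h | h | h
    · exact hw.not_mem n k (getElem?_shortcut_of_le h.le ▸ hk) (by omega)
        (mt (isColliderAt_shortcut_iff_of_add_two_le h).2 hnk)
    · intro hkK
      have hcoll : ∀ m, (A ++ v :: (B ++ v :: C))[m + 1]? = some k →
          m + 2 < A.length + B.length + C.length + 2 →
          IsColliderAt E (A ++ v :: (B ++ v :: C)) m k := fun m hm hlt =>
        by_contra fun hc => hw.not_mem m k hm (by omega) hc hkK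
      have := hw.eq_of_isColliderAt _ _ _ _
        (hcoll n (getElem?_shortcut_of_le h.le ▸ hk) (by omega)) (hcoll _ (hk₁ h.ge) (by omega))
      omega
    · exact hw.not_mem _ k (hk₁ h.le) (by omega)
        (mt (isColliderAt_shortcut_iff_of_le (by omega)).2 hnk)
  · obtain ⟨n₁', _, h₁', -, h₁⟩ := exists_isColliderAt_of_shortcut hA hw.isChain h₁
    obtain ⟨n₂', _, h₂', -, h₂⟩ := exists_isColliderAt_of_shortcut hA hw.isChain h₂
    have := hw.eq_of_isColliderAt _ _ _ _ h₁' h₂'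
    omega

end Shortcut

theorem IsStarConnectingWalk.exists_nodup (hA : Acyclic E) {w : List V}
    (hw : IsStarConnectingWalk E K i j w) : ∃ q, IsStarConnectingWalk E K i j q ∧ q.Nodup := by
  induction hlen : w.length using Nat.strong_induction_on generalizing w with
  | _ n ih =>
    by_cases hnd : w.Nodup
    · exact ⟨w, hw, hnd⟩
    obtain ⟨A, B, C, v, rfl⟩ := List.exists_eq_append_cons_append_cons_of_not_nodup hnd
    exact ih _ (by simp at hlen ⊢; omega) (hw.shortcut hA) rfl

end ConnectingWalks

/-- For a DAG, nodes `i`, `j` and a conditioning set `K ⊆ V \ {i,j}` with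
`|K| ≤ 1`, `i` and `j` are d-separated given `K` iff they are *-separated given `K`. -/
theorem dsep_iff_starsep_of_card_le_one
    (E : V → V → Prop) (hA : Acyclic E) (i j : V) (K : Set V)
    (hiK : i ∉ K) (hjK : j ∉ K) (hK : K.Subsingleton) :
    DSep E K i j ↔ StarSep E K i j := by
  refine ⟨fun hd ⟨p, hp⟩ => hd ⟨p, hp.1⟩, fun hs ⟨p, hp⟩ => hs ?_⟩
  have hw := hp.isDConnectingWalk
  by_cases hcol : ∃ n k, IsColliderAt E p n k
  · obtain ⟨n, k, hnk⟩ := hcol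
    obtain ⟨l, hl⟩ : ∃ l, l ∈ K := by
      rcases hw.inAn n k hnk with hk | ⟨l, hl, -⟩
      exacts [⟨k, hk⟩, ⟨l, hl⟩]
    have hKl : ∀ x ∈ K, x = l := fun x hx => hK hx hl
    obtain ⟨A, hiA⟩ := hw.exists_isTrekInto hA hiK hKl ⟨n, k, hnk⟩
    obtain ⟨B, hjB⟩ := hw.reverse.exists_isTrekInto hA hjK hKl ⟨_, k, hnk.reverse⟩
    obtain ⟨q, hq, hqnd⟩ := (hiA.isStarConnectingWalk hl hjB).exists_nodup hA
    exact ⟨q, hq.starConnecting hqnd⟩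
  · exact ⟨p, hp, fun k₁ _ h₁ _ => absurd (isColliderOn_iff_exists_isColliderAt.1 h₁)
      fun ⟨n, hn⟩ => hcol ⟨n, k₁, hn⟩⟩
end

section
/- If i and j are nodes in a DAG G such that there is no directed path from i to j and no directed path from j to i, and i,j are non-adjacent, then i and j are *-separated given pa(i). -/
variable {V : Type*}

/-!
In fact `i` and `j` are d-separated given `pa i`. A d-connecting path from `i` cannot leave `i`
through a parent `v → i`: such a `v` is an interior vertex in the conditioning set, so it must be
a collider, which forces the cycle `i → v → i`. So the path leaves along `i → v`, and from there
it follows edges forwards until its first collider. That collider is a descendant of `i`, yet it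
must be an ancestor of a parent of `i`, again a cycle; and without a collider the path is a
directed path from `i` to `j`.
-/

section Separation

variable {E : V → V → Prop}

lemma IsColliderOn.cons {p : List V} {k : V} (a : V) (h : IsColliderOn E p k) :
    IsColliderOn E (a :: p) k := by
  obtain ⟨l₁, l₂, b, c, rfl, hbk, hck⟩ := h
  exact ⟨a :: l₁, l₂, b, c, rfl, hbk, hck⟩

lemma IsColliderOn.head_edge {i v : V} {l : List V} (hnd : (i :: v :: l).Nodup)
    (h : IsColliderOn E (i :: v :: l) v) : E i v := by
  obtain ⟨l₁, l₂, a, b, hp, hav, -⟩ := h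
  rcases l₁ with _ | ⟨w, _ | ⟨u, t⟩⟩
  · obtain ⟨rfl, -⟩ := List.cons_eq_cons.mp hp
    exact hav
  · simp only [List.cons_append, List.nil_append, List.cons.injEq] at hp
    obtain ⟨-, rfl, rfl⟩ := hp
    simp at hnd
  · simp only [List.cons_append, List.cons.injEq] at hp
    obtain ⟨-, rfl, rfl⟩ := hp
    simp at hnd

lemma transGen_or_exists_collider (a x j : V) (l : List V)
    (hch : (a :: x :: l).IsChain (Adjd E)) (hlast : (a :: x :: l).getLast? = some j) (hax : E a x) :
    Relation.TransGen E a j ∨ ∃ k, IsColliderOn E (a :: x :: l) k ∧ Relation.TransGen E a k := by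
  induction l generalizing a x with
  | nil =>
    obtain rfl : x = j := by simpa using hlast
    exact .inl (.single hax)
  | cons b l ih =>
    rcases (List.isChain_cons_cons.mp hch).2 |> List.isChain_cons_cons.mp |>.1 with hxb | hbx
    · rcases ih x b (List.isChain_cons_cons.mp hch).2 (by simpa using hlast) hxb with
        hxj | ⟨k, hk, hxk⟩
      · exact .inl (.head hax hxj)
      · exact .inr ⟨k, hk.cons a, .head hax hxk⟩
    · exact .inr ⟨x, ⟨[], l, a, b, rfl, hax, hbx⟩, .single hax⟩

lemma not_inAn_pa_of_transGen (hA : Acyclic E) {i k : V} (hik : Relation.TransGen E i k) :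
    ¬ InAn E (pa E i) k := by
  rintro (hki | ⟨m, hmi, hkm⟩)
  · exact hA i (hik.tail hki)
  · exact hA i ((hik.trans hkm).tail hmi)

lemma IsUndirPath.exists_eq_cons_cons_cons {p : List V} {i j : V} (hp : IsUndirPath E p i j)
    (hij : i ≠ j) (hnadj : ¬ Adjd E i j) : ∃ v b l, p = i :: v :: b :: l := by
  obtain ⟨hch, hhead, hlast, -⟩ := hp
  match p, hhead, hlast, hch with
  | [], hhead, _, _ => simp at hhead
  | [_], hhead, hlast, _ => simp_all
  | [_, _], hhead, hlast, hch =>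
    simp only [List.head?_cons, List.getLast?_cons_cons, List.getLast?_singleton,
      Option.some.injEq] at hhead hlast
    subst hhead hlast
    exact (hnadj (List.isChain_cons_cons.mp hch).1).elim
  | _ :: v :: b :: l, hhead, _, _ => exact ⟨v, b, l, by simpa using hhead⟩

lemma dSep_pa_of_not_transGen (hA : Acyclic E) {i j : V} (hij : i ≠ j)
    (hnij : ¬ Relation.TransGen E i j) (hnadj : ¬ Adjd E i j) : DSep E (pa E i) i j := by
  rintro ⟨p, hp, hcol, hncol⟩
  obtain ⟨v, b, l, rfl⟩ := hp.exists_eq_cons_cons_cons hij hnadj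
  obtain ⟨hch, -, hlast, hnd⟩ := hp
  rcases (List.isChain_cons_cons.mp hch).1 with hiv | hvi
  · rcases transGen_or_exists_collider i v j (b :: l) hch hlast hiv with hdir | ⟨k, hk, hik⟩
    · exact hnij hdir
    · exact not_inAn_pa_of_transGen hA hik (hcol k hk)
  · have hcollider : IsColliderOn E (i :: v :: b :: l) v := by
      by_contra hnc
      exact hncol v (by simp [interiorL]) hnc hvi
    exact not_inAn_pa_of_transGen hA (.single (hcollider.head_edge hnd)) (hcol v hcollider)

lemma starSep_of_dSep {K : Set V} {i j : V} (h : DSep E K i j) : StarSep E K i j :=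
  fun ⟨p, hp, _⟩ => h ⟨p, hp⟩

end Separation

theorem starsep_given_pa_of_no_dirpath_general
    (E : V → V → Prop) (hA : Acyclic E) (i j : V) (hij : i ≠ j)
    (hnij : ¬ Relation.TransGen E i j)
    (hnadj : ¬ Adjd E i j) :
    StarSep E (pa E i) i j :=
  starSep_of_dSep (dSep_pa_of_not_transGen hA hij hnij hnadj)

/-- If `i` and `j` are nodes in a DAG such that there is no directed path
between them in either direction and they are non-adjacent, then `i` and `j` are
*-separated given `pa i`. -/
theorem starsep_given_pa_of_no_dirpath
    (E : V → V → Prop) (hA : Acyclic E) (i j : V) (hij : i ≠ j)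
    (hnij : ¬ Relation.TransGen E i j) (hnji : ¬ Relation.TransGen E j i)
    (hnadj : ¬ Adjd E i j) :
    StarSep E (pa E i) i j :=
  starsep_given_pa_of_no_dirpath_general E hA i j hij hnij hnadj
end
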